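/- Let F = {log f_n} be a subadditive sequence of positive continuous functions on a one-sided subshift X. Then X is right balanced with respect to F if and only if F has bounded variation and there exist 0 < C₁ < 1 and k ∈ ℕ such that for every n, m ∈ ℕ and every allowable word u of length m: Σ_{v∈F_{n+k}(u)} f_{m+n+k}(x_{uv}) ≥ C₁ f_m(x_u) Σ_{v∈B_n(X)} f_n(x_v) for each choice of points x_{uv} ∈ [uv], x_u ∈ [u], x_v ∈ [v]. -/
import Mathlib


open scoped Classical BigOperators
open Filter MeasureTheory

namespace Paper

/-- Points of the full one-sided shift over `k` symbols. -/
abbrev Pt (k : ℕ) := ℕ → Fin k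

variable {k : ℕ}

/-- The one-sided shift map. -/
def shift (x : Pt k) : Pt k := fun n => x (n + 1)

/-- A one-sided subshift: a closed shift-invariant subset. -/
def IsSubshift (X : Set (Pt k)) : Prop := IsClosed X ∧ ∀ x ∈ X, shift x ∈ X

/-- The cylinder set `[u]` of a word `u` of length `n` inside `X`. -/
def cylinder (X : Set (Pt k)) {n : ℕ} (u : Fin n → Fin k) : Set (Pt k) :=
  {x | x ∈ X ∧ ∀ i : Fin n, x (i : ℕ) = u i}

/-- A word is allowable if its cylinder in `X` is nonempty. -/
def Allowable (X : Set (Pt k)) {n : ℕ} (u : Fin n → Fin k) : Prop :=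
  (cylinder X u).Nonempty

/-- `B_n(X)`: the finite set of allowable words of length `n`. -/
noncomputable def words (X : Set (Pt k)) (n : ℕ) : Finset (Fin n → Fin k) :=
  Finset.univ.filter fun u => Allowable X u

/-- `F_n(u)`: words `v` of length `n` with `uv` allowable. -/
noncomputable def Fext (X : Set (Pt k)) {m : ℕ} (u : Fin m → Fin k) (n : ℕ) :
    Finset (Fin n → Fin k) :=
  Finset.univ.filter fun v => Allowable X (Fin.append u v)

/-- `P_n(u)`: words `v` of length `n` with `vu` allowable. -/
noncomputable def Pext (X : Set (Pt k)) {m : ℕ} (u : Fin m → Fin k) (n : ℕ) :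
    Finset (Fin n → Fin k) :=
  Finset.univ.filter fun v => Allowable X (Fin.append v u)

/-- `F = {log f_n}` is a sequence of positive continuous functions on `X`. -/
def GoodSeq (X : Set (Pt k)) (f : ℕ → Pt k → ℝ) : Prop :=
  ∀ n, ContinuousOn (f n) X ∧ ∀ x ∈ X, 0 < f n x

/-- The right balanced condition with constant `C` and threshold `K`. -/
def RightBalancedWith (X : Set (Pt k)) (f : ℕ → Pt k → ℝ) (C : ℝ) (K : ℕ) : Prop :=
  ∀ m n : ℕ, 0 < m → K ≤ n → ∀ u : Fin m → Fin k, u ∈ words X m →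
    ∀ xu ∈ cylinder X u,
    ∀ y : (Fin n → Fin k) → Pt k,
      (∀ v ∈ Fext X u n, y v ∈ cylinder X (Fin.append u v)) →
    ∀ z : (Fin n → Fin k) → Pt k,
      (∀ w ∈ words X n, z w ∈ cylinder X w) →
      1 / C ≤ (∑ v ∈ Fext X u n, f (m + n) (y v)) /
          (f m xu * ∑ w ∈ words X n, f n (z w)) ∧
      (∑ v ∈ Fext X u n, f (m + n) (y v)) /
          (f m xu * ∑ w ∈ words X n, f n (z w)) ≤ C

/-- The left balanced condition with constant `C` and threshold `K`. -/
def LeftBalancedWith (X : Set (Pt k)) (f : ℕ → Pt k → ℝ) (C : ℝ) (K : ℕ) : Prop :=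
  ∀ m n : ℕ, 0 < m → K ≤ n → ∀ u : Fin m → Fin k, u ∈ words X m →
    ∀ xu ∈ cylinder X u,
    ∀ y : (Fin n → Fin k) → Pt k,
      (∀ v ∈ Pext X u n, y v ∈ cylinder X (Fin.append v u)) →
    ∀ z : (Fin n → Fin k) → Pt k,
      (∀ w ∈ words X n, z w ∈ cylinder X w) →
      1 / C ≤ (∑ v ∈ Pext X u n, f (n + m) (y v)) /
          (f m xu * ∑ w ∈ words X n, f n (z w)) ∧
      (∑ v ∈ Pext X u n, f (n + m) (y v)) /
          (f m xu * ∑ w ∈ words X n, f n (z w)) ≤ C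

def RightBalanced (X : Set (Pt k)) (f : ℕ → Pt k → ℝ) : Prop :=
  ∃ C : ℝ, 1 ≤ C ∧ ∃ K : ℕ, 1 ≤ K ∧ RightBalancedWith X f C K

def LeftBalanced (X : Set (Pt k)) (f : ℕ → Pt k → ℝ) : Prop :=
  ∃ C : ℝ, 1 ≤ C ∧ ∃ K : ℕ, 1 ≤ K ∧ LeftBalancedWith X f C K

def Balanced (X : Set (Pt k)) (f : ℕ → Pt k → ℝ) : Prop :=
  RightBalanced X f ∧ LeftBalanced X f

/-- Boundedly supermultiplicative with constant `C` and threshold `K`. -/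
def BSMWith (X : Set (Pt k)) (f : ℕ → Pt k → ℝ) (C : ℝ) (K : ℕ) : Prop :=
  ∀ m n : ℕ, 0 < m → K ≤ n →
    ∀ a : (Fin m → Fin k) → Pt k, (∀ u ∈ words X m, a u ∈ cylinder X u) →
    ∀ b : (Fin n → Fin k) → Pt k, (∀ v ∈ words X n, b v ∈ cylinder X v) →
    ∀ c : (Fin (m + n) → Fin k) → Pt k, (∀ w ∈ words X (m + n), c w ∈ cylinder X w) →
      1 / C ≤ ((∑ u ∈ words X m, f m (a u)) * (∑ v ∈ words X n, f n (b v))) /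
          (∑ w ∈ words X (m + n), f (m + n) (c w)) ∧
      ((∑ u ∈ words X m, f m (a u)) * (∑ v ∈ words X n, f n (b v))) /
          (∑ w ∈ words X (m + n), f (m + n) (c w)) ≤ C

def BSM (X : Set (Pt k)) (f : ℕ → Pt k → ℝ) : Prop :=
  ∃ C : ℝ, 1 ≤ C ∧ ∃ K : ℕ, 1 ≤ K ∧ BSMWith X f C K

/-- The Gibbs inequality for `μ` with pressure constant `P` and constant `C`. -/
def GibbsWith (X : Set (Pt k)) (f : ℕ → Pt k → ℝ) (μ : Measure (Pt k)) (P C : ℝ) : Prop :=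
  ∀ n : ℕ, 0 < n → ∀ u : Fin n → Fin k, u ∈ words X n → ∀ x ∈ cylinder X u,
    1 / C ≤ (μ (cylinder X u)).toReal / (Real.exp (-(n : ℝ) * P) * f n x) ∧
    (μ (cylinder X u)).toReal / (Real.exp (-(n : ℝ) * P) * f n x) ≤ C

/-- `μ` is a (Borel probability) Gibbs measure on `X` for the sequence `f`. -/
def IsGibbs (X : Set (Pt k)) (f : ℕ → Pt k → ℝ) (μ : Measure (Pt k)) : Prop :=
  IsProbabilityMeasure μ ∧ μ Xᶜ = 0 ∧ ∃ P C : ℝ, 0 < C ∧ GibbsWith X f μ P C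

/-- Shift invariance of a measure. -/
def InvariantM (μ : Measure (Pt k)) : Prop :=
  ∀ s : Set (Pt k), MeasurableSet s → μ (shift ⁻¹' s) = μ s

/-- Ergodicity of a measure with respect to the shift. -/
def ErgodicM (μ : Measure (Pt k)) : Prop :=
  ∀ s : Set (Pt k), MeasurableSet s → shift ⁻¹' s = s → μ s = 0 ∨ μ s = 1

/-- Subadditivity of the sequence with constant `C`. -/
def SubaddWith (X : Set (Pt k)) (f : ℕ → Pt k → ℝ) (C : ℝ) : Prop :=
  0 ≤ C ∧ ∀ x ∈ X, ∀ m n : ℕ, f (m + n) x ≤ Real.exp C * (f m x * f n (shift^[m] x))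

def Subadditive (X : Set (Pt k)) (f : ℕ → Pt k → ℝ) : Prop := ∃ C, SubaddWith X f C

/-- Superadditivity of the sequence with constant `C`. -/
def SuperaddWith (X : Set (Pt k)) (f : ℕ → Pt k → ℝ) (C : ℝ) : Prop :=
  0 ≤ C ∧ ∀ x ∈ X, ∀ m n : ℕ, Real.exp (-C) * (f m x * f n (shift^[m] x)) ≤ f (m + n) x

def Superadditive (X : Set (Pt k)) (f : ℕ → Pt k → ℝ) : Prop := ∃ C, SuperaddWith X f C

/-- Bounded variation with constant `M`. -/
def BddVarWith (X : Set (Pt k)) (f : ℕ → Pt k → ℝ) (M : ℝ) : Prop :=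
  1 ≤ M ∧ ∀ n : ℕ, ∀ x ∈ X, ∀ y ∈ X, (∀ i < n, x i = y i) → f n x / f n y ≤ M

def BddVar (X : Set (Pt k)) (f : ℕ → Pt k → ℝ) : Prop := ∃ M, BddVarWith X f M

/-- The partition sums `Z_n(F)`. -/
noncomputable def Zn (X : Set (Pt k)) (f : ℕ → Pt k → ℝ) (n : ℕ) : ℝ :=
  ∑ u ∈ words X n, sSup (f n '' cylinder X u)

/-- The topological pressure `P(F) = limsup (1/n) log Z_n(F)`. -/
noncomputable def pressure (X : Set (Pt k)) (f : ℕ → Pt k → ℝ) : ℝ :=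
  Filter.limsup (fun n : ℕ => Real.log (Zn X f n) / n) atTop

/-- Condition (C2): quasi-multiplicativity. -/
def QuasiMult (X : Set (Pt k)) (f : ℕ → Pt k → ℝ) : Prop :=
  ∃ k₀ : ℕ, ∃ D : ℝ, 0 < D ∧ D < 1 ∧
    ∀ (m n : ℕ) (u : Fin m → Fin k) (v : Fin n → Fin k),
      Allowable X u → Allowable X v →
      ∃ i, i ≤ k₀ ∧ ∃ w : Fin i → Fin k,
        Allowable X (Fin.append (Fin.append u w) v) ∧
        D * sSup (f m '' cylinder X u) * sSup (f n '' cylinder X v) ≤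
          sSup (f (m + i + n) '' cylinder X (Fin.append (Fin.append u w) v))

/-- Strong specification property with specification number `s`. -/
def StrongSpec (X : Set (Pt k)) (s : ℕ) : Prop :=
  ∀ (m n : ℕ) (u : Fin m → Fin k) (v : Fin n → Fin k),
    Allowable X u → Allowable X v →
    ∃ w : Fin s → Fin k, Allowable X (Fin.append (Fin.append u w) v)

/-- Irreducibility of a subshift. -/
def IrreducibleShift (X : Set (Pt k)) : Prop :=
  ∀ (m n : ℕ) (u : Fin m → Fin k) (v : Fin n → Fin k),
    Allowable X u → Allowable X v →
    ∃ (l : ℕ) (w : Fin l → Fin k), Allowable X (Fin.append (Fin.append u w) v)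

/-- The `n`-th partition entropy of `μ`. -/
noncomputable def Hn (X : Set (Pt k)) (μ : Measure (Pt k)) (n : ℕ) : ℝ :=
  -∑ u ∈ words X n, (μ (cylinder X u)).toReal * Real.log (μ (cylinder X u)).toReal

/-- Measure-theoretic entropy of an invariant measure on a subshift. -/
noncomputable def entropy (X : Set (Pt k)) (μ : Measure (Pt k)) : ℝ :=
  ⨅ n : ℕ, Hn X μ (n + 1) / (n + 1)

/-- The key partition-sum bound appearing in Lemma 2.2. -/
def KeyBound (X : Set (Pt k)) (f : ℕ → Pt k → ℝ) (C P : ℝ) : Prop :=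
  ∀ n : ℕ, 0 < n → ∀ z : (Fin n → Fin k) → Pt k,
    (∀ u ∈ words X n, z u ∈ cylinder X u) →
    1 / C ≤ Real.exp ((n : ℝ) * P) / (∑ u ∈ words X n, f n (z u)) ∧
    Real.exp ((n : ℝ) * P) / (∑ u ∈ words X n, f n (z u)) ≤ C


section Aux

variable {k : ℕ} {X : Set (Pt k)} {f : ℕ → Pt k → ℝ}

lemma shift_iter (x : Pt k) : ∀ (m n : ℕ), shift^[m] x n = x (n + m) := by
  intro m
  induction m generalizing x with
  | zero => intro n; simp
  | succ m ih =>
    intro n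
    rw [Function.iterate_succ_apply, ih (shift x) n]
    rfl

lemma iter_mem (hX : IsSubshift X) {x : Pt k} (hx : x ∈ X) (m : ℕ) : shift^[m] x ∈ X := by
  induction m with
  | zero => simpa using hx
  | succ m ih => rw [Function.iterate_succ_apply']; exact hX.2 _ ih

lemma mem_cyl_left {m n : ℕ} {u : Fin m → Fin k} {v : Fin n → Fin k} {x : Pt k}
    (hx : x ∈ cylinder X (Fin.append u v)) : x ∈ cylinder X u := by
  refine ⟨hx.1, fun i => ?_⟩
  have h := hx.2 (Fin.castAdd n i)
  rwa [Fin.coe_castAdd, Fin.append_left] at h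

lemma shift_mem_cyl_right (hX : IsSubshift X) {m n : ℕ} {u : Fin m → Fin k}
    {v : Fin n → Fin k} {x : Pt k}
    (hx : x ∈ cylinder X (Fin.append u v)) : shift^[m] x ∈ cylinder X v := by
  refine ⟨iter_mem hX hx.1 m, fun i => ?_⟩
  rw [shift_iter]
  have h := hx.2 (Fin.natAdd m i)
  rw [Fin.coe_natAdd, Fin.append_right] at h
  rwa [Nat.add_comm]

lemma allowable_left {m n : ℕ} {u : Fin m → Fin k} {v : Fin n → Fin k}
    (h : Allowable X (Fin.append u v)) : Allowable X u := by
  obtain ⟨x, hx⟩ := h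
  exact ⟨x, mem_cyl_left hx⟩

lemma fext_subset_words (hX : IsSubshift X) {m n : ℕ} {u : Fin m → Fin k}
    {v : Fin n → Fin k} (h : v ∈ Fext X u n) : v ∈ words X n := by
  rw [Fext, Finset.mem_filter] at h
  obtain ⟨x, hx⟩ := h.2
  exact Finset.mem_filter.2 ⟨Finset.mem_univ _, ⟨_, shift_mem_cyl_right hX hx⟩⟩

/-- Splitting equivalence for words. -/
def appendEquiv (k m n : ℕ) : ((Fin m → Fin k) × (Fin n → Fin k)) ≃ (Fin (m + n) → Fin k) where
  toFun p := Fin.append p.1 p.2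
  invFun w := (fun i => w (Fin.castAdd n i), fun i => w (Fin.natAdd m i))
  left_inv p := by
    ext i
    · simp [Fin.append_left]
    · simp [Fin.append_right]
  right_inv w := by
    funext i
    induction i using Fin.addCases with
    | left i => simp [Fin.append_left]
    | right i => simp [Fin.append_right]

lemma sum_decomp (hX : IsSubshift X) (m n : ℕ) (g : (Fin (m + n) → Fin k) → ℝ) :
    ∑ w ∈ words X (m + n), g w = ∑ u ∈ words X m, ∑ v ∈ Fext X u n, g (Fin.append u v) := by
  have h1 : ∀ u : Fin m → Fin k,
      (∑ v ∈ Fext X u n, g (Fin.append u v))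
        = ∑ v : Fin n → Fin k, if Allowable X (Fin.append u v) then g (Fin.append u v) else 0 := by
    intro u
    rw [Fext, Finset.sum_filter]
  have h2 : ∑ u ∈ words X m, ∑ v ∈ Fext X u n, g (Fin.append u v)
      = ∑ u : Fin m → Fin k, ∑ v : Fin n → Fin k,
          if Allowable X (Fin.append u v) then g (Fin.append u v) else 0 := by
    rw [words, Finset.sum_filter]
    refine Finset.sum_congr rfl fun u _ => ?_
    by_cases hu : Allowable X u
    · rw [if_pos hu, h1]
    · rw [if_neg hu]
      symm
      refine Finset.sum_eq_zero fun v _ => ?_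
      rw [if_neg (fun h => hu (allowable_left h))]
  rw [h2, words, Finset.sum_filter]
  have he := Fintype.sum_equiv (appendEquiv k m n)
    (fun p => if Allowable X (Fin.append p.1 p.2) then g (Fin.append p.1 p.2) else 0)
    (fun a => if Allowable X a then g a else 0) (fun p => rfl)
  rw [← he, Fintype.sum_prod_type]

lemma words_nonempty (hne : X.Nonempty) (n : ℕ) : (words X n).Nonempty := by
  obtain ⟨x, hx⟩ := hne
  exact ⟨fun i => x (i : ℕ), Finset.mem_filter.2 ⟨Finset.mem_univ _, ⟨x, hx, fun i => rfl⟩⟩⟩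

lemma allowable_of_mem_words {n : ℕ} {u : Fin n → Fin k} (h : u ∈ words X n) : Allowable X u :=
  (Finset.mem_filter.1 h).2

lemma f_pos (hf : GoodSeq X f) {n : ℕ} {x : Pt k} (hx : x ∈ X) : 0 < f n x :=
  (hf n).2 x hx

lemma sum_words_pos (hf : GoodSeq X f) (hne : X.Nonempty) {n : ℕ}
    {z : (Fin n → Fin k) → Pt k} (hz : ∀ w ∈ words X n, z w ∈ cylinder X w) :
    0 < ∑ w ∈ words X n, f n (z w) := by
  refine Finset.sum_pos (fun w hw => f_pos hf (hz w hw).1) (words_nonempty hne n)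

end Aux

section Aux2

variable {k : ℕ} {X : Set (Pt k)} {f : ℕ → Pt k → ℝ}

/-- A choice of a point in each allowable cylinder (with fallback `x₀`). -/
noncomputable def pick (X : Set (Pt k)) (x₀ : Pt k) {n : ℕ} (u : Fin n → Fin k) : Pt k :=
  if h : Allowable X u then h.choose else x₀

lemma pick_mem {x₀ : Pt k} {n : ℕ} {u : Fin n → Fin k} (h : Allowable X u) :
    pick X x₀ u ∈ cylinder X u := by
  rw [pick, dif_pos h]
  exact h.choose_spec

lemma bdd_le (hf : GoodSeq X f) {M : ℝ} (hM : BddVarWith X f M) {n : ℕ}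
    {u : Fin n → Fin k} {x y : Pt k} (hx : x ∈ cylinder X u) (hy : y ∈ cylinder X u) :
    f n x ≤ M * f n y := by
  have h := hM.2 n x hx.1 y hy.1 (fun i hi => by
    have h1 := hx.2 ⟨i, hi⟩
    have h2 := hy.2 ⟨i, hi⟩
    simp only [] at h1 h2
    rw [h1, h2])
  exact (div_le_iff₀ (f_pos hf hy.1)).1 h

/-- The subadditive + bounded variation upper bound (Lemma A). -/
lemma upperA (hX : IsSubshift X) (hf : GoodSeq X f) {Cs M : ℝ}
    (hCs : SubaddWith X f Cs) (hM : BddVarWith X f M)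
    (m n : ℕ) (u : Fin m → Fin k) (xu : Pt k) (hxu : xu ∈ cylinder X u)
    (y : (Fin n → Fin k) → Pt k)
    (hy : ∀ v ∈ Fext X u n, y v ∈ cylinder X (Fin.append u v))
    (z : (Fin n → Fin k) → Pt k) (hz : ∀ w ∈ words X n, z w ∈ cylinder X w) :
    ∑ v ∈ Fext X u n, f (m + n) (y v)
      ≤ Real.exp Cs * M ^ 2 * (f m xu * ∑ w ∈ words X n, f n (z w)) := by
  have hM0 : 0 < M := lt_of_lt_of_le one_pos hM.1
  have hfxu : 0 < f m xu := f_pos hf hxu.1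
  have key : ∀ v ∈ Fext X u n,
      f (m + n) (y v) ≤ (Real.exp Cs * M ^ 2 * f m xu) * f n (z v) := by
    intro v hv
    have hyv := hy v hv
    have hvw := fext_subset_words hX hv
    have hzv := hz v hvw
    have h1 := hCs.2 (y v) hyv.1 m n
    have h2 : f m (y v) ≤ M * f m xu := bdd_le hf hM (mem_cyl_left hyv) hxu
    have h3 : f n (shift^[m] (y v)) ≤ M * f n (z v) :=
      bdd_le hf hM (shift_mem_cyl_right hX hyv) hzv
    have hp1 : 0 < f m (y v) := f_pos hf hyv.1
    have hp2 : 0 < f n (shift^[m] (y v)) := f_pos hf (iter_mem hX hyv.1 m)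
    have hp3 : 0 < f n (z v) := f_pos hf hzv.1
    have hexp : 0 < Real.exp Cs := Real.exp_pos Cs
    nlinarith [mul_le_mul h2 h3 hp2.le (by positivity : (0:ℝ) ≤ M * f m xu),
      mul_le_mul_of_nonneg_left (mul_le_mul h2 h3 hp2.le
        (by positivity : (0:ℝ) ≤ M * f m xu)) hexp.le]
  calc ∑ v ∈ Fext X u n, f (m + n) (y v)
      ≤ ∑ v ∈ Fext X u n, (Real.exp Cs * M ^ 2 * f m xu) * f n (z v) :=
        Finset.sum_le_sum key
    _ ≤ ∑ v ∈ words X n, (Real.exp Cs * M ^ 2 * f m xu) * f n (z v) := by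
        refine Finset.sum_le_sum_of_subset_of_nonneg
          (fun v hv => fext_subset_words hX hv) (fun w hw _ => ?_)
        have : 0 < f n (z w) := f_pos hf (hz w hw).1
        positivity
    _ = Real.exp Cs * M ^ 2 * (f m xu * ∑ w ∈ words X n, f n (z w)) := by
        rw [← Finset.mul_sum]; ring

end Aux2

/-- characterization of the right balanced property for subadditive sequences. -/
theorem stmt10 {k : ℕ} (X : Set (Pt k)) (f : ℕ → Pt k → ℝ)
    (hX : IsSubshift X) (hf : GoodSeq X f) (hsub : Subadditive X f) :
    RightBalanced X f ↔
      (BddVar X f ∧ ∃ C₁ : ℝ, 0 < C₁ ∧ C₁ < 1 ∧ ∃ k₀ : ℕ,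
        ∀ m n : ℕ, 0 < m → 0 < n → ∀ u : Fin m → Fin k, u ∈ words X m →
          ∀ xu ∈ cylinder X u,
          ∀ y : (Fin (n + k₀) → Fin k) → Pt k,
            (∀ v ∈ Fext X u (n + k₀), y v ∈ cylinder X (Fin.append u v)) →
          ∀ z : (Fin n → Fin k) → Pt k,
            (∀ w ∈ words X n, z w ∈ cylinder X w) →
            C₁ * (f m xu * ∑ w ∈ words X n, f n (z w)) ≤
              ∑ v ∈ Fext X u (n + k₀), f (m + n + k₀) (y v)) := by
  obtain ⟨Cs, hCs⟩ := hsub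
  constructor
  · rintro ⟨C, hC1, K, hK1, hRB⟩
    have hCpos : 0 < C := lt_of_lt_of_le one_pos hC1
    by_cases hne : X.Nonempty
    · obtain ⟨x₀, hx₀⟩ := hne
      have hne : X.Nonempty := ⟨x₀, hx₀⟩
      have hzk : ∀ n : ℕ, ∀ w ∈ words X n, pick X x₀ w ∈ cylinder X w :=
        fun n w hw => pick_mem (allowable_of_mem_words hw)
      -- compactness bounds for f 0
      have hcomp : IsCompact X := hX.1.isCompact
      obtain ⟨xmax, hxmaxX, hmax⟩ := hcomp.exists_isMaxOn hne (hf 0).1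
      obtain ⟨xmin, hxminX, hmin⟩ := hcomp.exists_isMinOn hne (hf 0).1
      have hb : 0 < f 0 xmin := f_pos hf hxminX
      have hB : 0 < f 0 xmax := f_pos hf hxmaxX
      set M : ℝ := max (max (f 0 xmax / f 0 xmin) (C ^ 2)) 1 with hMdef
      have hM1 : 1 ≤ M := le_max_right _ _
      -- Bounded variation
      have hMvar : BddVarWith X f M := by
        refine ⟨hM1, fun n x hx y hy hagree => ?_⟩
        cases n with
        | zero =>
          refine le_trans (div_le_div₀ hB.le (hmax hx) hb (hmin hy)) ?_
          exact le_trans (le_max_left _ _) (le_max_left _ _)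
        | succ n' =>
          set u : Fin (n' + 1) → Fin k := fun i => x (i : ℕ) with hudef
          have hxu : x ∈ cylinder X u := ⟨hx, fun i => rfl⟩
          have hyu : y ∈ cylinder X u := ⟨hy, fun i => (hagree (i : ℕ) i.isLt).symm⟩
          have hu : u ∈ words X (n' + 1) :=
            Finset.mem_filter.2 ⟨Finset.mem_univ _, ⟨x, hxu⟩⟩
          set yF : (Fin K → Fin k) → Pt k := fun v => pick X x₀ (Fin.append u v) with hyFdef
          have hyF : ∀ v ∈ Fext X u K, yF v ∈ cylinder X (Fin.append u v) :=
            fun v hv => pick_mem (Finset.mem_filter.1 hv).2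
          have h1 := hRB (n' + 1) K (Nat.succ_pos _) le_rfl u hu x hxu yF hyF
            (pick X x₀) (hzk K)
          have h2 := hRB (n' + 1) K (Nat.succ_pos _) le_rfl u hu y hyu yF hyF
            (pick X x₀) (hzk K)
          set S := ∑ v ∈ Fext X u K, f (n' + 1 + K) (yF v) with hSdef
          set T := ∑ w ∈ words X K, f K (pick X x₀ w) with hTdef
          have hT : 0 < T := sum_words_pos hf hne (hzk K)
          have hfx : 0 < f (n' + 1) x := f_pos hf hx
          have hfy : 0 < f (n' + 1) y := f_pos hf hy
          rw [div_le_div_iff₀ hCpos (mul_pos hfx hT)] at h1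
          rw [div_le_iff₀ (mul_pos hfy hT)] at h2
          have hfxy : f (n' + 1) x * T ≤ C ^ 2 * f (n' + 1) y * T := by
            nlinarith [h1.1, h2.2]
          have hxy : f (n' + 1) x ≤ C ^ 2 * f (n' + 1) y :=
            le_of_mul_le_mul_right hfxy hT
          refine le_trans ((div_le_iff₀ hfy).2 hxy) ?_
          exact le_trans (le_max_right _ _) (le_max_left _ _)
      have hM0 : 0 < M := lt_of_lt_of_le one_pos hM1
      set cK : ℝ := ∑ w ∈ words X K, f K (pick X x₀ w) with hcKdef
      have hcK : 0 < cK := sum_words_pos hf hne (hzk K)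
      refine ⟨⟨M, hMvar⟩, min (1 / 2) (cK / (C ^ 2 * M)), ?_, ?_, K, ?_⟩
      · exact lt_min (by norm_num) (div_pos hcK (by positivity))
      · exact lt_of_le_of_lt (min_le_left _ _) (by norm_num)
      · intro m n hm hn u hu xu hxu y hy z hz
        rw [add_assoc]
        have hD : 0 < f m xu := f_pos hf hxu.1
        set D := f m xu with hDdef
        set Z := ∑ w ∈ words X n, f n (z w) with hZdef
        have hZ : 0 < Z := sum_words_pos hf hne hz
        set T' := ∑ w ∈ words X n, f n (pick X x₀ w) with hT'def
        have hT' : 0 < T' := sum_words_pos hf hne (hzk n)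
        set T₂ := ∑ w ∈ words X (n + K), f (n + K) (pick X x₀ w) with hT₂def
        have hT₂ : 0 < T₂ := sum_words_pos hf hne (hzk (n + K))
        set S := ∑ v ∈ Fext X u (n + K), f (m + (n + K)) (y v) with hSdef
        -- e1 : D * T₂ ≤ C * S
        have h1 := hRB m (n + K) hm (Nat.le_add_left K n) u hu xu hxu y hy
          (pick X x₀) (hzk (n + K))
        rw [div_le_div_iff₀ hCpos (mul_pos hD hT₂)] at h1
        have e1 : D * T₂ ≤ C * S := by linarith [h1.1]
        -- e2 : T' * cK ≤ C * T₂
        have hdec : T₂ = ∑ u' ∈ words X n, ∑ v ∈ Fext X u' K,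
            f (n + K) (pick X x₀ (Fin.append u' v)) :=
          sum_decomp hX n K (fun w => f (n + K) (pick X x₀ w))
        have e2 : T' * cK ≤ C * T₂ := by
          have step : ∀ u' ∈ words X n, f n (pick X x₀ u') * cK ≤
              C * ∑ v ∈ Fext X u' K, f (n + K) (pick X x₀ (Fin.append u' v)) := by
            intro u' hu'
            have hpu' : pick X x₀ u' ∈ cylinder X u' :=
              pick_mem (allowable_of_mem_words hu')
            have hpu'0 : 0 < f n (pick X x₀ u') := f_pos hf hpu'.1
            have h := hRB n K hn le_rfl u' hu' (pick X x₀ u') hpu'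
              (fun v => pick X x₀ (Fin.append u' v))
              (fun v hv => pick_mem (Finset.mem_filter.1 hv).2)
              (pick X x₀) (hzk K)
            rw [div_le_div_iff₀ hCpos (mul_pos hpu'0 hcK)] at h
            linarith [h.1]
          calc T' * cK = ∑ u' ∈ words X n, f n (pick X x₀ u') * cK := by
                rw [hT'def, Finset.sum_mul]
            _ ≤ ∑ u' ∈ words X n, C * ∑ v ∈ Fext X u' K,
                  f (n + K) (pick X x₀ (Fin.append u' v)) :=
                Finset.sum_le_sum step
            _ = C * T₂ := by rw [← Finset.mul_sum, ← hdec]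
        -- e3 : Z ≤ M * T'
        have e3 : Z ≤ M * T' := by
          rw [hZdef, hT'def, Finset.mul_sum]
          refine Finset.sum_le_sum fun w hw => ?_
          exact bdd_le hf hMvar (hz w hw) (hzk n w hw)
        -- combine
        have hmin' : min (1 / 2) (cK / (C ^ 2 * M)) ≤ cK / (C ^ 2 * M) :=
          min_le_right _ _
        have hfinal : cK / (C ^ 2 * M) * (D * Z) ≤ S := by
          rw [div_mul_eq_mul_div, div_le_iff₀ (by positivity : (0:ℝ) < C ^ 2 * M)]
          calc cK * (D * Z) ≤ cK * (D * (M * T')) := by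
                refine mul_le_mul_of_nonneg_left
                  (mul_le_mul_of_nonneg_left e3 hD.le) hcK.le
            _ = (M * D) * (T' * cK) := by ring
            _ ≤ (M * D) * (C * T₂) :=
                mul_le_mul_of_nonneg_left e2 (by positivity)
            _ = (C * M) * (D * T₂) := by ring
            _ ≤ (C * M) * (C * S) :=
                mul_le_mul_of_nonneg_left e1 (by positivity)
            _ = S * (C ^ 2 * M) := by ring
        calc min (1 / 2) (cK / (C ^ 2 * M)) * (D * Z)
            ≤ cK / (C ^ 2 * M) * (D * Z) :=
              mul_le_mul_of_nonneg_right hmin' (by positivity)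
          _ ≤ S := hfinal
    · -- X empty
      refine ⟨⟨1, le_refl 1, fun n x hx y hy h => (hne ⟨x, hx⟩).elim⟩,
        1 / 2, by norm_num, by norm_num, 0, ?_⟩
      intro m n hm hn u hu
      obtain ⟨x, hx⟩ := allowable_of_mem_words hu
      exact ((hne ⟨x, hx.1⟩).elim)
  · rintro ⟨⟨M, hMB⟩, C₁, hC₁0, hC₁1, k₀, hkey⟩
    have hM1 : 1 ≤ M := hMB.1
    by_cases hne : X.Nonempty
    · obtain ⟨x₀, hx₀⟩ := hne
      have hne : X.Nonempty := ⟨x₀, hx₀⟩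
      have hzk : ∀ n : ℕ, ∀ w ∈ words X n, pick X x₀ w ∈ cylinder X w :=
        fun n w hw => pick_mem (allowable_of_mem_words hw)
      set A : ℝ := Real.exp Cs * M ^ 2 with hAdef
      have hexp1 : 1 ≤ Real.exp Cs := by
        rw [show (1:ℝ) = Real.exp 0 by simp]
        exact Real.exp_le_exp.2 hCs.1
      have hA1 : 1 ≤ A := by nlinarith [hM1]
      have hA0 : 0 < A := lt_of_lt_of_le one_pos hA1
      set Z₀ : ℝ := ∑ w ∈ words X k₀, f k₀ (pick X x₀ w) with hZ₀def
      have hZ₀ : 0 < Z₀ := sum_words_pos hf hne (hzk k₀)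
      refine ⟨max A (A * Z₀ / C₁), le_trans hA1 (le_max_left _ _), k₀ + 1,
        Nat.succ_le_succ (Nat.zero_le _), ?_⟩
      set C : ℝ := max A (A * Z₀ / C₁) with hCdef
      have hCpos : 0 < C := lt_of_lt_of_le hA0 (le_max_left _ _)
      intro m n hm hn u hu xu hxu y hy z hz
      obtain ⟨n', rfl⟩ : ∃ n', n = n' + k₀ :=
        ⟨n - k₀, (Nat.sub_add_cancel (le_of_lt hn)).symm⟩
      have hn' : 0 < n' := by omega
      have hD : 0 < f m xu := f_pos hf hxu.1
      set D := f m xu with hDdef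
      set T := ∑ w ∈ words X (n' + k₀), f (n' + k₀) (z w) with hTdef
      have hT : 0 < T := sum_words_pos hf hne hz
      set T' := ∑ w ∈ words X n', f n' (pick X x₀ w) with hT'def
      have hT' : 0 < T' := sum_words_pos hf hne (hzk n')
      set S := ∑ v ∈ Fext X u (n' + k₀), f (m + (n' + k₀)) (y v) with hSdef
      -- lower bound on S
      have hlow : C₁ * (D * T') ≤ S := by
        have h := hkey m n' hm hn' u hu xu hxu y hy (pick X x₀) (hzk n')
        rw [add_assoc] at h
        exact h
      have hS : 0 < S := lt_of_lt_of_le (by positivity) hlow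
      -- upper bound on T
      have hTbound : T ≤ A * Z₀ * T' := by
        have hdec : T = ∑ u' ∈ words X n', ∑ v ∈ Fext X u' k₀,
            f (n' + k₀) (z (Fin.append u' v)) :=
          sum_decomp hX n' k₀ (fun w => f (n' + k₀) (z w))
        have step : ∀ u' ∈ words X n', ∑ v ∈ Fext X u' k₀,
            f (n' + k₀) (z (Fin.append u' v)) ≤ A * (f n' (pick X x₀ u') * Z₀) := by
          intro u' hu'
          refine upperA hX hf hCs hMB n' k₀ u' (pick X x₀ u')
            (pick_mem (allowable_of_mem_words hu'))
            (fun v => z (Fin.append u' v)) (fun v hv => ?_) (pick X x₀) (hzk k₀)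
          have hall : Allowable X (Fin.append u' v) := (Finset.mem_filter.1 hv).2
          exact hz _ (Finset.mem_filter.2 ⟨Finset.mem_univ _, hall⟩)
        calc T = ∑ u' ∈ words X n', ∑ v ∈ Fext X u' k₀,
              f (n' + k₀) (z (Fin.append u' v)) := hdec
          _ ≤ ∑ u' ∈ words X n', A * (f n' (pick X x₀ u') * Z₀) :=
              Finset.sum_le_sum step
          _ = A * Z₀ * T' := by
              rw [hT'def, Finset.mul_sum]
              exact Finset.sum_congr rfl fun u' _ => by ring
      -- upper bound on S
      have hSup : S ≤ A * (D * T) :=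
        upperA hX hf hCs hMB m (n' + k₀) u xu hxu y hy z hz
      constructor
      · rw [div_le_div_iff₀ hCpos (mul_pos hD hT)]
        have key : D * T ≤ (A * Z₀ / C₁) * S := by
          calc D * T ≤ D * (A * Z₀ * T') := mul_le_mul_of_nonneg_left hTbound hD.le
            _ = (A * Z₀) * (D * T') := by ring
            _ ≤ (A * Z₀) * (S / C₁) := by
                refine mul_le_mul_of_nonneg_left ?_ (by positivity)
                rw [le_div_iff₀ hC₁0]
                linarith [hlow]
            _ = (A * Z₀ / C₁) * S := by ring
        have hle : A * Z₀ / C₁ ≤ C := le_max_right _ _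
        nlinarith [mul_le_mul_of_nonneg_right hle hS.le]
      · rw [div_le_iff₀ (mul_pos hD hT)]
        have hAC : A ≤ C := le_max_left _ _
        nlinarith [mul_le_mul_of_nonneg_right hAC (mul_pos hD hT).le]
    · refine ⟨1, le_refl 1, 1, le_refl 1, ?_⟩
      intro m n hm hn u hu
      obtain ⟨x, hx⟩ := allowable_of_mem_words hu
      exact ((hne ⟨x, hx.1⟩).elim)


end Paper
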